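/- (Key identity in the proof of Proposition 6 on NIS redundancy.) Let (Ω, μ) be a probability space, S, U, V, T, W finite nonempty measurable spaces with measurable singletons, ψ : S ≃ U × V a bijection (measurable with measurable inverse), and X : Ω → S, Y : Ω → T, Z : Ω → W measurable. Define A := ω ↦ (ψ (X ω)).1 and B := ω ↦ (ψ (X ω)).2. Assume A is independent of the triple ⟨B, Y, Z⟩ and H[B | Y] = 0. Then H[X | ⟨Y, Z⟩] = H[X | Y] = H[A], and H[X | ⟨Y, Z⟩] = H[X | Z] − H[B | Z]. -/

import Mathlib

open MeasureTheory ProbabilityTheory Real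

/-- Shannon entropy (natural logarithm) of a random variable `X : Ω → S`:
`H[X] = ∑ₓ -P(X = x) log P(X = x)`. -/
noncomputable def entropy {Ω S : Type*} [MeasurableSpace Ω] [MeasurableSpace S]
    (μ : Measure Ω) (X : Ω → S) : ℝ :=
  ∑' x : S, Real.negMulLog (μ (X ⁻¹' {x})).toReal

/-- Conditional Shannon entropy `H[X|Y] = ∑_y P(Y = y) · H[X ; μ conditioned on Y = y]`. -/
noncomputable def condEntropy {Ω S T : Type*} [MeasurableSpace Ω] [MeasurableSpace S]
    [MeasurableSpace T] (μ : Measure Ω) (X : Ω → S) (Y : Ω → T) : ℝ :=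
  ∑' y : T, (μ (Y ⁻¹' {y})).toReal * entropy (μ[|Y ⁻¹' {y}]) X

/-- Mutual information `I[X:Y] = H[X] + H[Y] − H[⟨X,Y⟩]`. -/
noncomputable def mutualInfo {Ω S T : Type*} [MeasurableSpace Ω] [MeasurableSpace S]
    [MeasurableSpace T] (μ : Measure Ω) (X : Ω → S) (Y : Ω → T) : ℝ :=
  entropy μ X + entropy μ Y - entropy μ (fun ω => (X ω, Y ω))

/-- Conditional mutual information
`I[X:Y|Z] = H[⟨X,Z⟩] + H[⟨Y,Z⟩] − H[⟨⟨X,Y⟩,Z⟩] − H[Z]`. -/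
noncomputable def condMutualInfo {Ω S T W : Type*} [MeasurableSpace Ω] [MeasurableSpace S]
    [MeasurableSpace T] [MeasurableSpace W] (μ : Measure Ω)
    (X : Ω → S) (Y : Ω → T) (Z : Ω → W) : ℝ :=
  entropy μ (fun ω => (X ω, Z ω)) + entropy μ (fun ω => (Y ω, Z ω))
    - entropy μ (fun ω => ((X ω, Y ω), Z ω)) - entropy μ Z


/-!
Because `ψ` is a bijection, `X` carries exactly the information of the pair `⟨A, B⟩`.
Conditioning on a fibre of any function `G` of `⟨Y, Z⟩` is conditioning on an event determined
by `⟨B, Y, Z⟩`, so `A` keeps its law and stays independent of `B`; hence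
`H[X | G] = H[A] + H[B | G]`. For `G = Y` and `G = ⟨Y, Z⟩` the last term vanishes:
`H[B | Y] = 0` makes `B` almost surely constant on every fibre of `Y` of positive mass, and
therefore on every fibre of the finer variable `⟨Y, Z⟩`.
-/

open Set

lemma Real.eq_zero_or_eq_one_of_negMulLog_eq_zero {x : ℝ} (h0 : 0 ≤ x)
    (hx : negMulLog x = 0) : x = 0 ∨ x = 1 := by
  simp only [negMulLog, neg_mul, neg_eq_zero] at hx
  by_contra! hne
  rcases (Ne.lt_or_gt hne.2) with hlt | hgt
  · linarith [mul_log_neg (h0.lt_of_ne hne.1.symm) hlt]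
  · linarith [mul_pos (zero_lt_one.trans hgt) (log_pos hgt)]

section Entropy

variable {Ω S T : Type*} [MeasurableSpace Ω] [MeasurableSpace S] [MeasurableSpace T]

lemma sum_measureReal_preimage_singleton_eq_one [Fintype T] [MeasurableSingletonClass T]
    (μ : Measure Ω) [IsProbabilityMeasure μ] {f : Ω → T} (hf : Measurable f) :
    ∑ t, μ.real (f ⁻¹' {t}) = 1 := by
  rw [sum_measureReal_preimage_singleton _ fun t _ => hf (measurableSet_singleton t)]
  simp

lemma entropy_eq_sum [Fintype S] (μ : Measure Ω) (X : Ω → S) :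
    entropy μ X = ∑ x, negMulLog (μ.real (X ⁻¹' {x})) :=
  tsum_fintype _

lemma condEntropy_eq_sum [Fintype T] (μ : Measure Ω) (X : Ω → S) (Y : Ω → T) :
    condEntropy μ X Y = ∑ y, μ.real (Y ⁻¹' {y}) * entropy (μ[|Y ⁻¹' {y}]) X :=
  tsum_fintype _

lemma entropy_comp_equiv {S' : Type*} [MeasurableSpace S'] (μ : Measure Ω) (X : Ω → S)
    (e : S ≃ S') : entropy μ (fun ω => e (X ω)) = entropy μ X := by
  unfold entropy
  refine (e.tsum_eq _).symm.trans (tsum_congr fun x => ?_)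
  have hs : (fun ω => e (X ω)) ⁻¹' {e x} = X ⁻¹' {x} := by ext ω; simp
  rw [hs]

lemma condEntropy_comp_equiv {S' : Type*} [MeasurableSpace S'] (μ : Measure Ω) (X : Ω → S)
    (e : S ≃ S') (Y : Ω → T) : condEntropy μ (fun ω => e (X ω)) Y = condEntropy μ X Y := by
  simp only [condEntropy, entropy_comp_equiv]

lemma entropy_nonneg [Fintype S] (μ : Measure Ω) [IsZeroOrProbabilityMeasure μ] (X : Ω → S) :
    0 ≤ entropy μ X := by
  rw [entropy_eq_sum]
  exact Finset.sum_nonneg fun _ _ => negMulLog_nonneg measureReal_nonneg measureReal_le_one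

lemma entropy_eq_zero_iff [Fintype S] [MeasurableSingletonClass S]
    (μ : Measure Ω) [IsProbabilityMeasure μ] {X : Ω → S} (hX : Measurable X) :
    entropy μ X = 0 ↔ ∃ x, ∀ᵐ ω ∂μ, X ω = x := by
  have hfibre : ∀ x, MeasurableSet (X ⁻¹' {x}) := fun x => hX (measurableSet_singleton x)
  have hae : ∀ x, (∀ᵐ ω ∂μ, X ω = x) ↔ μ.real (X ⁻¹' {x}) = 1 := fun x => by
    rw [ae_iff, Measure.real, ENNReal.toReal_eq_one_iff, ← prob_compl_eq_zero_iff (hfibre x)]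
    rfl
  rw [entropy_eq_sum]
  constructor
  · intro h
    have hzero := (Finset.sum_eq_zero_iff_of_nonneg fun x _ =>
      negMulLog_nonneg measureReal_nonneg measureReal_le_one).1 h
    obtain ⟨x, hx⟩ : ∃ x, μ.real (X ⁻¹' {x}) ≠ 0 := by
      by_contra! hc
      simpa [hc] using sum_measureReal_preimage_singleton_eq_one μ hX
    refine ⟨x, (hae x).2 ?_⟩
    exact ((Real.eq_zero_or_eq_one_of_negMulLog_eq_zero measureReal_nonneg
      (hzero x (Finset.mem_univ x))).resolve_left hx)
  · rintro ⟨x, hx⟩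
    refine Finset.sum_eq_zero fun y _ => ?_
    rcases eq_or_ne y x with rfl | hyx
    · rw [(hae y).1 hx, negMulLog_one]
    · have hy : μ (X ⁻¹' {y}) = 0 :=
        measure_mono_null (fun ω (hω : X ω = y) (hx' : X ω = x) => hyx (hω.symm.trans hx'))
          (ae_iff.1 hx)
      simp [Measure.real, hy]

lemma condEntropy_eq_zero_iff [Fintype S] [Fintype T] (μ : Measure Ω) [IsFiniteMeasure μ]
    (X : Ω → S) (Y : Ω → T) :
    condEntropy μ X Y = 0 ↔ ∀ y, μ (Y ⁻¹' {y}) ≠ 0 → entropy (μ[|Y ⁻¹' {y}]) X = 0 := by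
  rw [condEntropy_eq_sum, Finset.sum_eq_zero_iff_of_nonneg fun y _ =>
    mul_nonneg measureReal_nonneg (entropy_nonneg _ X)]
  refine forall_congr' fun y => ?_
  simp only [Finset.mem_univ, true_implies, mul_eq_zero]
  rw [measureReal_eq_zero_iff]
  tauto

lemma condEntropy_eq_zero_of_comp {R : Type*} [MeasurableSpace R] [Fintype S]
    [MeasurableSingletonClass S] [Fintype T] [MeasurableSingletonClass T] [Fintype R]
    [MeasurableSingletonClass R] (μ : Measure Ω) [IsProbabilityMeasure μ] {X : Ω → S}
    {G : Ω → T} (hX : Measurable X) (hG : Measurable G) (f : T → R)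
    (h : condEntropy μ X (fun ω => f (G ω)) = 0) : condEntropy μ X G = 0 := by
  rw [condEntropy_eq_zero_iff] at h ⊢
  intro g hg
  have hfibre : G ⁻¹' {g} ⊆ (fun ω => f (G ω)) ⁻¹' {f g} := fun ω (hω : G ω = g) =>
    congrArg f hω
  have hfg : μ ((fun ω => f (G ω)) ⁻¹' {f g}) ≠ 0 := fun h0 => hg (measure_mono_null hfibre h0)
  have := cond_isProbabilityMeasure hfg
  have := cond_isProbabilityMeasure hg
  obtain ⟨x, hx⟩ := (entropy_eq_zero_iff _ hX).1 (h (f g) hfg)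
  refine (entropy_eq_zero_iff _ hX).2 ⟨x, ?_⟩
  have hcond : μ[|(fun ω => f (G ω)) ⁻¹' {f g}][|G ⁻¹' {g}] = μ[|G ⁻¹' {g}] := by
    have hF : MeasurableSet ((fun ω => f (G ω)) ⁻¹' {f g}) :=
      (measurable_of_finite f).comp hG (measurableSet_singleton _)
    rw [cond_cond_eq_cond_inter hF (hG (measurableSet_singleton _)), inter_eq_right.2 hfibre]
  exact hcond ▸ cond_absolutelyContinuous.ae_le hx

end Entropy

section Independence

variable {Ω U V T : Type*} [MeasurableSpace Ω] [MeasurableSpace U] [MeasurableSpace V]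
  [MeasurableSpace T] {μ : Measure Ω}

lemma entropy_pair_eq_add_of_indepFun [Fintype U] [MeasurableSingletonClass U] [Fintype V]
    [MeasurableSingletonClass V] [IsProbabilityMeasure μ] {A : Ω → U} {B : Ω → V}
    (hA : Measurable A) (hB : Measurable B) (h : IndepFun A B μ) :
    entropy μ (fun ω => (A ω, B ω)) = entropy μ A + entropy μ B := by
  have hmul : ∀ a b, μ.real (A ⁻¹' {a} ∩ B ⁻¹' {b}) = μ.real (A ⁻¹' {a}) * μ.real (B ⁻¹' {b}) :=
    fun a b => by
      rw [measureReal_def, h.measure_inter_preimage_eq_mul _ _ (measurableSet_singleton a)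
        (measurableSet_singleton b), ENNReal.toReal_mul, measureReal_def, measureReal_def]
  simp only [entropy_eq_sum, Fintype.sum_prod_type, ← singleton_prod_singleton, mk_preimage_prod,
    hmul, negMulLog_mul, Finset.sum_add_distrib, ← Finset.sum_mul, ← Finset.mul_sum,
    sum_measureReal_preimage_singleton_eq_one μ hA, sum_measureReal_preimage_singleton_eq_one μ hB,
    one_mul]

lemma ProbabilityTheory.IndepFun.cond_preimage_inter {C : Ω → T} {A : Ω → U}
    (h : IndepFun A C μ) (hC : Measurable C) {s : Set U} {t t' : Set T} (hs : MeasurableSet s)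
    (ht : MeasurableSet t) (ht' : MeasurableSet t') :
    μ[|C ⁻¹' t] (A ⁻¹' s ∩ C ⁻¹' t') = μ (A ⁻¹' s) * μ[|C ⁻¹' t] (C ⁻¹' t') := by
  have hinter : C ⁻¹' t ∩ (A ⁻¹' s ∩ C ⁻¹' t') = A ⁻¹' s ∩ C ⁻¹' (t ∩ t') := by
    ext ω; simp only [mem_inter_iff, mem_preimage]; tauto
  rw [cond_apply (hC ht), cond_apply (hC ht), hinter,
    h.measure_inter_preimage_eq_mul _ _ hs (ht.inter ht'), preimage_inter, mul_left_comm]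

lemma ProbabilityTheory.IndepFun.cond_preimage_left [IsFiniteMeasure μ] {C : Ω → T}
    {A : Ω → U} (h : IndepFun A C μ) (hC : Measurable C) {s : Set U} {t : Set T}
    (hs : MeasurableSet s) (ht : MeasurableSet t) (hCt : μ (C ⁻¹' t) ≠ 0) :
    μ[|C ⁻¹' t] (A ⁻¹' s) = μ (A ⁻¹' s) := by
  have := cond_isProbabilityMeasure hCt
  simpa using h.cond_preimage_inter hC hs ht MeasurableSet.univ

lemma ProbabilityTheory.IndepFun.indepFun_cond_preimage [IsFiniteMeasure μ] {A : Ω → U}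
    {B : Ω → V} {G : Ω → T}
    (h : IndepFun A (fun ω => (B ω, G ω)) μ) (hB : Measurable B) (hG : Measurable G)
    {u : Set T} (hu : MeasurableSet u) (hGu : μ (G ⁻¹' u) ≠ 0) : IndepFun A B μ[|G ⁻¹' u] := by
  have hC : Measurable fun ω => (B ω, G ω) := hB.prodMk hG
  have hGu' : G ⁻¹' u = (fun ω => (B ω, G ω)) ⁻¹' (univ ×ˢ u) := by ext; simp
  rw [hGu'] at hGu ⊢
  rw [indepFun_iff_measure_inter_preimage_eq_mul]
  intro s t hs ht
  have hBt : B ⁻¹' t = (fun ω => (B ω, G ω)) ⁻¹' (t ×ˢ univ) := by ext; simp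
  rw [hBt, h.cond_preimage_inter hC hs (MeasurableSet.univ.prod hu) (ht.prod .univ),
    h.cond_preimage_left hC hs (MeasurableSet.univ.prod hu) hGu]

lemma condEntropy_pair_eq_entropy_add_condEntropy [Fintype U] [MeasurableSingletonClass U]
    [Fintype V] [MeasurableSingletonClass V] [Fintype T] [MeasurableSingletonClass T]
    [IsProbabilityMeasure μ] {A : Ω → U} {B : Ω → V} {G : Ω → T} (hA : Measurable A)
    (hB : Measurable B) (hG : Measurable G) (h : IndepFun A (fun ω => (B ω, G ω)) μ) :
    condEntropy μ (fun ω => (A ω, B ω)) G = entropy μ A + condEntropy μ B G := by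
  have hAG : IndepFun A G μ := h.comp measurable_id measurable_snd
  have hfibre : ∀ g, μ (G ⁻¹' {g}) ≠ 0 →
      entropy μ[|G ⁻¹' {g}] (fun ω => (A ω, B ω)) = entropy μ A + entropy μ[|G ⁻¹' {g}] B := by
    intro g hg
    have := cond_isProbabilityMeasure hg
    rw [entropy_pair_eq_add_of_indepFun hA hB
      (h.indepFun_cond_preimage hB hG (measurableSet_singleton g) hg)]
    congr 1
    simp only [entropy_eq_sum, measureReal_def,
      hAG.cond_preimage_left hG (measurableSet_singleton _) (measurableSet_singleton g) hg]
  rw [condEntropy_eq_sum, condEntropy_eq_sum, ← one_mul (entropy μ A),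
    ← sum_measureReal_preimage_singleton_eq_one μ hG, Finset.sum_mul, ← Finset.sum_add_distrib]
  refine Finset.sum_congr rfl fun g _ => ?_
  rcases eq_or_ne (μ (G ⁻¹' {g})) 0 with hg | hg
  · simp [measureReal_def, hg]
  · rw [hfibre g hg]
    ring

end Independence

theorem nis_redundancy_key_identity_general {Ω S U V T W : Type*} [MeasurableSpace Ω]
    [MeasurableSpace S]
    [Fintype U] [MeasurableSpace U] [MeasurableSingletonClass U]
    [Fintype V] [MeasurableSpace V] [MeasurableSingletonClass V]
    [Fintype T] [MeasurableSpace T] [MeasurableSingletonClass T]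
    [Fintype W] [MeasurableSpace W] [MeasurableSingletonClass W]
    (μ : Measure Ω) [IsProbabilityMeasure μ]
    (ψ : S ≃ U × V) (hψ : Measurable ψ)
    (X : Ω → S) (Y : Ω → T) (Z : Ω → W)
    (hX : Measurable X) (hY : Measurable Y) (hZ : Measurable Z)
    (A : Ω → U) (B : Ω → V)
    (hA : A = fun ω => (ψ (X ω)).1) (hB : B = fun ω => (ψ (X ω)).2)
    (hindep : IndepFun A (fun ω => (B ω, Y ω, Z ω)) μ)
    (hBY : condEntropy μ B Y = 0) :
    (condEntropy μ X (fun ω => (Y ω, Z ω)) = condEntropy μ X Y ∧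
      condEntropy μ X Y = entropy μ A) ∧
    condEntropy μ X (fun ω => (Y ω, Z ω)) = condEntropy μ X Z - condEntropy μ B Z := by
  have hAm : Measurable A := hA ▸ measurable_fst.comp (hψ.comp hX)
  have hBm : Measurable B := hB ▸ measurable_snd.comp (hψ.comp hX)
  have hX_eq : X = fun ω => ψ.symm (A ω, B ω) := by funext ω; simp [hA, hB]
  have hsplitYZ := condEntropy_pair_eq_entropy_add_condEntropy hAm hBm (hY.prodMk hZ) hindep
  have hsplitY := condEntropy_pair_eq_entropy_add_condEntropy hAm hBm hY
    (hindep.comp measurable_id (measurable_fst.prodMk measurable_snd.fst))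
  have hsplitZ := condEntropy_pair_eq_entropy_add_condEntropy hAm hBm hZ
    (hindep.comp measurable_id (measurable_fst.prodMk measurable_snd.snd))
  have hBYZ : condEntropy μ B (fun ω => (Y ω, Z ω)) = 0 :=
    condEntropy_eq_zero_of_comp μ hBm (hY.prodMk hZ) Prod.fst hBY
  simp only [hX_eq, condEntropy_comp_equiv]
  rw [hsplitYZ, hsplitY, hsplitZ, hBY, hBYZ]
  exact ⟨⟨rfl, add_zero _⟩, by ring⟩

/-- key identity in the proof of NIS redundancy symmetry: if `ψ` splits `X`
into noise `A` and representation `B` with `A` independent of `⟨B,Y,Z⟩` and `H[B|Y] = 0`,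
then `H[X|⟨Y,Z⟩] = H[X|Y] = H[A]` and `H[X|⟨Y,Z⟩] = H[X|Z] − H[B|Z]`. -/
theorem nis_redundancy_key_identity {Ω S U V T W : Type*} [MeasurableSpace Ω]
    [Fintype S] [Nonempty S] [MeasurableSpace S] [MeasurableSingletonClass S]
    [Fintype U] [Nonempty U] [MeasurableSpace U] [MeasurableSingletonClass U]
    [Fintype V] [Nonempty V] [MeasurableSpace V] [MeasurableSingletonClass V]
    [Fintype T] [Nonempty T] [MeasurableSpace T] [MeasurableSingletonClass T]
    [Fintype W] [Nonempty W] [MeasurableSpace W] [MeasurableSingletonClass W]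
    (μ : Measure Ω) [IsProbabilityMeasure μ]
    (ψ : S ≃ U × V) (hψ : Measurable ψ) (hψ' : Measurable ψ.symm)
    (X : Ω → S) (Y : Ω → T) (Z : Ω → W)
    (hX : Measurable X) (hY : Measurable Y) (hZ : Measurable Z)
    (A : Ω → U) (B : Ω → V)
    (hA : A = fun ω => (ψ (X ω)).1) (hB : B = fun ω => (ψ (X ω)).2)
    (hindep : IndepFun A (fun ω => (B ω, Y ω, Z ω)) μ)
    (hBY : condEntropy μ B Y = 0) :
    (condEntropy μ X (fun ω => (Y ω, Z ω)) = condEntropy μ X Y ∧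
      condEntropy μ X Y = entropy μ A) ∧
    condEntropy μ X (fun ω => (Y ω, Z ω)) = condEntropy μ X Z - condEntropy μ B Z :=
  nis_redundancy_key_identity_general μ ψ hψ X Y Z hX hY hZ A B hA hB hindep hBY
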